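/- arXiv:2010.14024 — 3 statements merged into one kernel-verified Lean document; each statement's English description precedes it below -/
import Mathlib

section
/- Let R = ℤ or 𝔽_p[t], F its fraction field, K a finite separable extension of F, O_K the integral closure of R in K, T = {𝔭_1, …, 𝔭_n} a finite set of prime ideals of O_K, S its complement among all places (including the infinite ones), and O_{K,S} the corresponding holomorphy ring. Let L = L_div (resp. L_{div,t}) and let L̄ be obtained from L by removing | and adding binary relation symbols ≠, ‖, o_1, …, o_n, interpreted in O_{K,S} by: x ≠ y is inequality; x ‖ y iff x | y and y ≠ 0; o_i(x, y) iff x ≠ 0 and ord_{𝔭_i}(x) > ord_{𝔭_i}(y). Then for every existential L-formula φ(x̄) there exists a positive-existential L̄-formula φ̄(x̄) such that for every tuple c̄ over O_{K,S}, O_{K,S} ⊨ φ(c̄) if and only if O_{K,S} ⊨ φ̄(c̄). -/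
open FirstOrder Language IsDedekindDomain Polynomial

set_option linter.unusedSectionVars false

namespace Paper

/-- The divisibility relation symbol. -/
inductive DivRel : ℕ → Type
  | dvd : DivRel 2

instance : Encodable (Σ n, DivRel n) :=
  ⟨fun _ => 0, fun n => match n with | 0 => some ⟨2, .dvd⟩ | _ => none,
   by rintro ⟨n, r⟩; cases r; rfl⟩

/-- Function symbols of the language `L_div = {0, 1, +, =, |}`. -/
inductive DivFunc : ℕ → Type
  | zero : DivFunc 0
  | one : DivFunc 0
  | add : DivFunc 2

/-- The language `L_div = {0, 1, +, =, |}`. -/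
def Ldiv : Language := ⟨DivFunc, DivRel⟩

instance : Encodable (Σ n, DivFunc n) :=
  ⟨fun x => match x with
    | ⟨_, .zero⟩ => 0 | ⟨_, .one⟩ => 1 | ⟨_, .add⟩ => 2,
   fun n => match n with
    | 0 => some ⟨0, .zero⟩ | 1 => some ⟨0, .one⟩ | 2 => some ⟨2, .add⟩ | _ => none,
   by rintro ⟨n, f⟩; cases f <;> rfl⟩

instance : Encodable (Σ n, Ldiv.Functions n) :=
  inferInstanceAs (Encodable (Σ n, DivFunc n))

instance : Encodable (Σ n, Ldiv.Relations n) :=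
  inferInstanceAs (Encodable (Σ n, DivRel n))

/-- The `L_div`-structure on a commutative ring: `0`, `1`, `+` and divisibility. -/
def divStructure (R : Type*) [CommRing R] : Ldiv.Structure R where
  funMap {_} f := match f with
    | .zero => fun _ => 0
    | .one => fun _ => 1
    | .add => fun v => v 0 + v 1
  RelMap {_} r := match r with
    | .dvd => fun v => v 0 ∣ v 1

/-- Function symbols of `L_{div,t} = {0, 1, +, =, |, ·t}`. -/
inductive DivTFunc : ℕ → Type
  | zero : DivTFunc 0
  | one : DivTFunc 0
  | mulT : DivTFunc 1
  | add : DivTFunc 2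

/-- The language `L_{div,t} = {0, 1, +, =, |, ·t}`. -/
def LdivT : Language := ⟨DivTFunc, DivRel⟩

instance : Encodable (Σ n, DivTFunc n) :=
  ⟨fun x => match x with
    | ⟨_, .zero⟩ => 0 | ⟨_, .one⟩ => 1 | ⟨_, .mulT⟩ => 2 | ⟨_, .add⟩ => 3,
   fun n => match n with
    | 0 => some ⟨0, .zero⟩ | 1 => some ⟨0, .one⟩ | 2 => some ⟨1, .mulT⟩
    | 3 => some ⟨2, .add⟩ | _ => none,
   by rintro ⟨n, f⟩; cases f <;> rfl⟩

instance : Encodable (Σ n, LdivT.Functions n) :=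
  inferInstanceAs (Encodable (Σ n, DivTFunc n))

instance : Encodable (Σ n, LdivT.Relations n) :=
  inferInstanceAs (Encodable (Σ n, DivRel n))

/-- The `L_{div,t}`-structure on a commutative ring, where `·t` is interpreted as
multiplication by a fixed element `τ`. -/
def divTStructure (R : Type*) [CommRing R] (τ : R) : LdivT.Structure R where
  funMap {_} f := match f with
    | .zero => fun _ => 0
    | .one => fun _ => 1
    | .mulT => fun v => τ * v 0
    | .add => fun v => v 0 + v 1
  RelMap {_} r := match r with
    | .dvd => fun v => v 0 ∣ v 1

/-- A sentence is existential if it is the existential closure of a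
quantifier-free formula. -/
def IsExistentialSentence {L : Language} (φ : L.Sentence) : Prop :=
  ∃ (n : ℕ) (ψ : L.BoundedFormula Empty n), ψ.IsQF ∧ φ = ψ.exs

/-- A formula is existential if it is the existential closure of a
quantifier-free formula. -/
def IsExistentialFormula {L : Language} {α : Type*} (φ : L.Formula α) : Prop :=
  ∃ (n : ℕ) (ψ : L.BoundedFormula α n), ψ.IsQF ∧ φ = ψ.exs

/-- Gödel numbering of sentences, coming from Mathlib's encoding of bounded
formulas as lists of symbols. -/
noncomputable def sentenceEncode {L : Language}
    [Encodable (Σ n, L.Functions n)] [Encodable (Σ n, L.Relations n)]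
    (φ : L.Sentence) : ℕ :=
  Encodable.encode (BoundedFormula.listEncode φ)

/-- The theory of the `L`-structure `str` restricted to the sentences satisfying `P`
is decidable: there is a computable (total) function which, given the Gödel number
of a sentence satisfying `P`, decides whether the sentence holds in the structure. -/
def DecidesSentences {L : Language} {M : Type*} (str : L.Structure M)
    [Encodable (Σ n, L.Functions n)] [Encodable (Σ n, L.Relations n)]
    (P : L.Sentence → Prop) : Prop :=
  ∃ f : ℕ → Bool, Computable f ∧
    ∀ φ : L.Sentence, P φ → (f (sentenceEncode φ) = true ↔ @Sentence.Realize L M str φ)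

/-- Positive-existential formulas: built from atomic formulas (equalities and
relation assertions) using only conjunction, disjunction and existential
quantification. -/
inductive IsPosEx {L : Language} {α : Type*} : ∀ {n : ℕ}, L.BoundedFormula α n → Prop
  | equal {n} (t₁ t₂ : L.Term (α ⊕ Fin n)) : IsPosEx (t₁.bdEqual t₂)
  | rel {n ℓ} (R : L.Relations ℓ) (ts : Fin ℓ → L.Term (α ⊕ Fin n)) :
      IsPosEx (R.boundedFormula ts)
  | sup {n} {φ ψ : L.BoundedFormula α n} : IsPosEx φ → IsPosEx ψ → IsPosEx (φ ⊔ ψ)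
  | inf {n} {φ ψ : L.BoundedFormula α n} : IsPosEx φ → IsPosEx ψ → IsPosEx (φ ⊓ ψ)
  | ex {n} {φ : L.BoundedFormula α (n + 1)} : IsPosEx φ → IsPosEx φ.ex

/-- A subset of `M^k` is positive-existentially definable (without parameters) in
the `L`-structure `str`. -/
def PosExDefinable {L : Language} {M : Type*} (str : L.Structure M) {k : ℕ}
    (A : Set (Fin k → M)) : Prop :=
  ∃ φ : L.Formula (Fin k), IsPosEx φ ∧
    ∀ x : Fin k → M, x ∈ A ↔ @Formula.Realize L M str (Fin k) φ x

section HolomorphyRings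

variable {R : Type*} [CommRing R] [IsDedekindDomain R]
variable {K : Type*} [Field K] [Algebra R K] [IsFractionRing R K]

/-- The subring of elements of `K` that are integral at every prime satisfying `P`. -/
def integralAt (P : HeightOneSpectrum R → Prop) : Subring K where
  carrier := {x : K | ∀ v : HeightOneSpectrum R, P v → v.valuation K x ≤ 1}
  zero_mem' := fun v _ => by simp only [Valuation.map_zero]; exact zero_le_one
  one_mem' := fun v _ => le_of_eq (Valuation.map_one _)
  add_mem' := fun {x y} hx hy v hv =>
    le_trans (Valuation.map_add _ x y) (max_le (hx v hv) (hy v hv))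
  mul_mem' := fun {x y} hx hy v hv => by
    rw [Valuation.map_mul]; exact mul_le_one' (hx v hv) (hy v hv)
  neg_mem' := fun {x} hx v hv => by rw [Valuation.map_neg]; exact hx v hv

theorem mem_integralAt {P : HeightOneSpectrum R → Prop} {x : K} :
    x ∈ (integralAt P : Subring K) ↔
      ∀ v : HeightOneSpectrum R, P v → v.valuation K x ≤ 1 :=
  Iff.rfl

theorem algebraMap_mem_integralAt (P : HeightOneSpectrum R → Prop) (r : R) :
    algebraMap R K r ∈ (integralAt P : Subring K) :=
  fun v _ => v.valuation_le_one (K := K) r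

/-- The normalized additive `v`-adic valuation of an element of `K`, as an integer
(with junk value `0` at `x = 0`). -/
noncomputable def ordAt (v : HeightOneSpectrum R) (x : K) : ℤ :=
  if h : v.valuation K x = 0 then 0 else - Multiplicative.toAdd (WithZero.unzero h)

end HolomorphyRings

/-- Relation symbols of the language `L̄`: inequality `≠`, strict divisibility `‖`,
and the order-comparison predicates `o_1, …, o_n`. -/
inductive BarRel (n : ℕ) : ℕ → Type
  | ne : BarRel n 2
  | pardvd : BarRel n 2
  | o : Fin n → BarRel n 2

/-- The language `L̄` obtained from `L_div` by removing `|` and adding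
`≠`, `‖`, `o_1, …, o_n`. -/
def LbarDiv (n : ℕ) : Language := ⟨DivFunc, BarRel n⟩

/-- The language `L̄` obtained from `L_{div,t}` by removing `|` and adding
`≠`, `‖`, `o_1, …, o_n`. -/
def LbarDivT (n : ℕ) : Language := ⟨DivTFunc, BarRel n⟩

section BarStructures

variable {D : Type*} [CommRing D] [IsDedekindDomain D]
variable {K : Type*} [Field K] [Algebra D K] [IsFractionRing D K]

/-- The `L̄`-structure (for `L = L_div`) on a subring `M` of `K`:
`x ≠ y` is inequality, `x ‖ y` iff `x ∣ y ∧ y ≠ 0`, and `o_i(x,y)` iff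
`x ≠ 0` and `ord_{𝔭_i}(x) > ord_{𝔭_i}(y)`. -/
def barDivStructure (M : Subring K) {n : ℕ} (𝔭 : Fin n → HeightOneSpectrum D) :
    (LbarDiv n).Structure M where
  funMap {_} f := match f with
    | .zero => fun _ => 0
    | .one => fun _ => 1
    | .add => fun v => v 0 + v 1
  RelMap {_} r := match r with
    | .ne => fun v => v 0 ≠ v 1
    | .pardvd => fun v => v 0 ∣ v 1 ∧ v 1 ≠ 0
    | .o i => fun v => v 0 ≠ 0 ∧
        (𝔭 i).valuation K ((v 0 : M) : K) < (𝔭 i).valuation K ((v 1 : M) : K)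

/-- The `L̄`-structure (for `L = L_{div,t}`) on a subring `M` of `K`, with `·t`
interpreted as multiplication by `τ`. -/
def barDivTStructure (M : Subring K) (τ : M) {n : ℕ}
    (𝔭 : Fin n → HeightOneSpectrum D) : (LbarDivT n).Structure M where
  funMap {_} f := match f with
    | .zero => fun _ => 0
    | .one => fun _ => 1
    | .mulT => fun v => τ * v 0
    | .add => fun v => v 0 + v 1
  RelMap {_} r := match r with
    | .ne => fun v => v 0 ≠ v 1
    | .pardvd => fun v => v 0 ∣ v 1 ∧ v 1 ≠ 0
    | .o i => fun v => v 0 ≠ 0 ∧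
        (𝔭 i).valuation K ((v 0 : M) : K) < (𝔭 i).valuation K ((v 1 : M) : K)

end BarStructures

section FunctionFieldSetting

variable (p : ℕ) [Fact p.Prime]
variable (K : Type*) [Field K] [Algebra (RatFunc (ZMod p)) K]
  [Algebra (Polynomial (ZMod p)) K]
  [IsScalarTower (Polynomial (ZMod p)) (RatFunc (ZMod p)) K]
  [FunctionField (ZMod p) K]
  [Algebra.IsSeparable (RatFunc (ZMod p)) K]

/-- The ring of integers of the function field `K`: the integral closure of
`𝔽_p[t]` in `K`. -/
noncomputable abbrev OK := FunctionField.ringOfIntegers (ZMod p) K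

/-- The image in `O_K` of a polynomial over `𝔽_p`. -/
noncomputable def polyToOK (f : Polynomial (ZMod p)) : OK p K :=
  ⟨algebraMap (Polynomial (ZMod p)) K f, isIntegral_algebraMap⟩

/-- The holomorphy ring `O_{K,S}` when `S` consists of all the infinite places
together with the finite set `Sf` of finite places: the elements of `K` integral
at every finite place outside `Sf`. -/
noncomputable abbrev holoFin (Sf : Finset (HeightOneSpectrum (OK p K))) : Subring K :=
  integralAt (fun v => v ∉ Sf)

/-- The holomorphy ring `O_{K,S}` when `S` is the complement of the finite set `T`
of finite places: the elements of `K` integral at each prime of `T`. -/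
noncomputable abbrev holoCof (T : Finset (HeightOneSpectrum (OK p K))) : Subring K :=
  integralAt (fun v => v ∈ T)

theorem polyMem_holoFin (Sf : Finset (HeightOneSpectrum (OK p K)))
    (f : Polynomial (ZMod p)) :
    algebraMap (Polynomial (ZMod p)) K f ∈ holoFin p K Sf :=
  algebraMap_mem_integralAt _ (polyToOK p K f)

/-- The image of `t` in `K`. -/
noncomputable def tK : K := algebraMap (RatFunc (ZMod p)) K RatFunc.X

theorem tK_eqPoly : tK p K = algebraMap (Polynomial (ZMod p)) K Polynomial.X := by
  rw [IsScalarTower.algebraMap_apply (Polynomial (ZMod p)) (RatFunc (ZMod p)) K,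
    RatFunc.algebraMap_X]
  rfl

theorem tK_mem (Pr : HeightOneSpectrum (OK p K) → Prop) :
    tK p K ∈ (integralAt Pr : Subring K) := by
  rw [tK_eqPoly]
  exact algebraMap_mem_integralAt _ (polyToOK p K Polynomial.X)

end FunctionFieldSetting

/-!
Put the quantifier-free matrix of `φ` in negation normal form. Equalities and their
negations are already available in `L̄`, and `x ∣ y` holds iff `y = 0 ∨ x ‖ y`. The only
work is in `¬ x ∣ y`: in `O_{K,S}` only the primes `𝔭_i` can obstruct divisibility, so for
`x ≠ 0` we have `x ∣ y` iff `ord_{𝔭_i} x ≤ ord_{𝔭_i} y` for every `i`, whence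
`¬ x ∣ y ↔ (x = 0 ∧ y ≠ 0) ∨ ⋁ᵢ oᵢ(x, y)`.
-/

section PositiveExistential

variable {L : Language} {α : Type*} {k : ℕ}

lemma IsPosEx.foldr_sup {l : List (L.BoundedFormula α k)} {b : L.BoundedFormula α k}
    (hl : ∀ φ ∈ l, IsPosEx φ) (hb : IsPosEx b) : IsPosEx (l.foldr (· ⊔ ·) b) := by
  induction l with
  | nil => exact hb
  | cons φ l ih =>
    exact (hl φ List.mem_cons_self).sup (ih fun ψ hψ => hl ψ (List.mem_cons_of_mem φ hψ))

lemma IsPosEx.exs {φ : L.BoundedFormula α k} (h : IsPosEx φ) : IsPosEx φ.exs := by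
  induction k with
  | zero => exact h
  | succ k ih => exact ih h.ex

lemma IsPosEx.rel₂ (R : L.Relations 2) (t₁ t₂ : L.Term (α ⊕ Fin k)) :
    IsPosEx (R.boundedFormula₂ t₁ t₂) :=
  .rel _ _

lemma realize_foldr_sup_of_base {M : Type*} [L.Structure M] (l : List (L.BoundedFormula α k))
    (b : L.BoundedFormula α k) (v : α → M) (xs : Fin k → M) :
    (l.foldr (· ⊔ ·) b).Realize v xs ↔
      (∃ φ ∈ l, φ.Realize v xs) ∨ b.Realize v xs := by
  induction l with
  | nil => simp
  | cons φ l ih =>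
    simp only [List.foldr_cons, BoundedFormula.realize_sup, ih, List.mem_cons, exists_eq_or_imp,
      or_assoc]

end PositiveExistential

section Translation

abbrev divLanguage (F : ℕ → Type) : Language := ⟨F, DivRel⟩

abbrev barLanguage (F : ℕ → Type) (n : ℕ) : Language := ⟨F, BarRel n⟩

variable {F : ℕ → Type} {n : ℕ}

def toBarTerm {γ : Type*} : (divLanguage F).Term γ → (barLanguage F n).Term γ
  | .var i => .var i
  | .func f ts => .func f fun i => toBarTerm (ts i)

variable (z : F 0) {β : Type*}

def zeroTerm {γ : Type*} : (barLanguage F n).Term γ := .func z Fin.elim0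

/-- For quantifier-free `φ`, `toBarQF z true φ` expresses `φ` and `toBarQF z false φ`
expresses `¬ φ`, where `z` is the constant symbol for `0`. The value on `∀` is arbitrary. -/
def toBarQF : ∀ {k : ℕ}, Bool → (divLanguage F).BoundedFormula β k →
    (barLanguage F n).BoundedFormula β k
  | _, true, .falsum => Relations.boundedFormula₂ BarRel.ne (zeroTerm z) (zeroTerm z)
  | _, false, .falsum => (zeroTerm z).bdEqual (zeroTerm z)
  | _, true, .equal t₁ t₂ => (toBarTerm t₁).bdEqual (toBarTerm t₂)
  | _, false, .equal t₁ t₂ =>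
    Relations.boundedFormula₂ BarRel.ne (toBarTerm t₁) (toBarTerm t₂)
  | _, true, .rel .dvd ts =>
    (toBarTerm (ts 1)).bdEqual (zeroTerm z) ⊔
      Relations.boundedFormula₂ BarRel.pardvd (toBarTerm (ts 0)) (toBarTerm (ts 1))
  | _, false, .rel .dvd ts =>
    ((List.finRange n).map fun i =>
        Relations.boundedFormula₂ (BarRel.o i) (toBarTerm (ts 0)) (toBarTerm (ts 1))).foldr
      (· ⊔ ·) ((toBarTerm (ts 0)).bdEqual (zeroTerm z) ⊓
          Relations.boundedFormula₂ BarRel.ne (toBarTerm (ts 1)) (zeroTerm z))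
  | _, true, .imp φ ψ => toBarQF false φ ⊔ toBarQF true ψ
  | _, false, .imp φ ψ => toBarQF true φ ⊓ toBarQF false ψ
  | _, _, .all _ => (zeroTerm z).bdEqual (zeroTerm z)

lemma isPosEx_toBarQF {k : ℕ} {φ : (divLanguage F).BoundedFormula β k} (h : φ.IsQF)
    (b : Bool) : IsPosEx (toBarQF (n := n) z b φ) := by
  induction h generalizing b with
  | falsum => cases b <;> first | exact .equal _ _ | exact .rel₂ _ _ _
  | of_isAtomic h =>
    cases h with
    | equal t₁ t₂ =>
      cases b <;> first | exact .equal _ _ | exact .rel₂ _ _ _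
    | rel R ts =>
      cases R
      cases b
      · exact .foldr_sup (by simpa using fun i => .rel₂ _ _ _)
          ((IsPosEx.equal _ _).inf (.rel₂ _ _ _))
      · exact (IsPosEx.equal _ _).sup (.rel₂ _ _ _)
  | imp _ _ ih₁ ih₂ =>
    cases b
    · exact (ih₁ true).inf (ih₂ false)
    · exact (ih₁ false).sup (ih₂ true)

variable {M : Type*}

structure BarCompatible (str : (divLanguage F).Structure M)
    (strBar : (barLanguage F n).Structure M) : Prop where
  funMap_eq : ∀ {k : ℕ} (f : F k) (v : Fin k → M), str.funMap f v = strBar.funMap f v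
  ne_iff : ∀ x y : M, strBar.RelMap BarRel.ne ![x, y] ↔ x ≠ y
  dvd_iff : ∀ x y : M, str.RelMap DivRel.dvd ![x, y] ↔
    y = strBar.funMap z Fin.elim0 ∨ strBar.RelMap BarRel.pardvd ![x, y]
  not_dvd_iff : ∀ x y : M, ¬ str.RelMap DivRel.dvd ![x, y] ↔
    (x = strBar.funMap z Fin.elim0 ∧ y ≠ strBar.funMap z Fin.elim0) ∨
      ∃ i : Fin n, strBar.RelMap (BarRel.o i) ![x, y]

variable {z} [str : (divLanguage F).Structure M] [strBar : (barLanguage F n).Structure M]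

lemma BarCompatible.realize_toBarTerm (h : BarCompatible z str strBar) {γ : Type*} (v : γ → M) :
    ∀ t : (divLanguage F).Term γ,
      (toBarTerm t : (barLanguage F n).Term γ).realize v = t.realize v
  | .var _ => rfl
  | .func f ts => by
    simp only [toBarTerm, Term.realize, h.realize_toBarTerm v, h.funMap_eq]

lemma realize_zeroTerm {γ : Type*} (v : γ → M) :
    (zeroTerm z : (barLanguage F n).Term γ).realize v = strBar.funMap z Fin.elim0 := by
  simp only [zeroTerm, Term.realize]
  exact congrArg _ (Subsingleton.elim _ _)

lemma BarCompatible.realize_toBarQF (h : BarCompatible z str strBar) {k : ℕ}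
    {φ : (divLanguage F).BoundedFormula β k} (hφ : φ.IsQF) (v : β → M) (xs : Fin k → M) :
    ((toBarQF z true φ : (barLanguage F n).BoundedFormula β k).Realize v xs ↔
        φ.Realize v xs) ∧
      ((toBarQF z false φ : (barLanguage F n).BoundedFormula β k).Realize v xs ↔
        ¬ φ.Realize v xs) := by
  induction hφ with
  | falsum =>
    simp only [toBarQF, BoundedFormula.realize_rel₂, BoundedFormula.realize_bdEqual, h.ne_iff]
    simp [BoundedFormula.Realize]
  | of_isAtomic hφ =>
    cases hφ with
    | equal t₁ t₂ =>
      simp only [Term.bdEqual, toBarQF, BoundedFormula.realize_rel₂, h.ne_iff,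
        h.realize_toBarTerm]
      simp [BoundedFormula.Realize, h.realize_toBarTerm]
    | rel R ts =>
      cases R
      have hdvd : (BoundedFormula.rel DivRel.dvd ts).Realize v xs ↔ str.RelMap DivRel.dvd
          ![(ts 0).realize (Sum.elim v xs), (ts 1).realize (Sum.elim v xs)] := by
        have hts : ![(ts 0).realize (Sum.elim v xs), (ts 1).realize (Sum.elim v xs)] =
            fun i => (ts i).realize (Sum.elim v xs) := by
          ext i
          fin_cases i <;> rfl
        rw [hts]
        rfl
      simp only [Relations.boundedFormula, toBarQF, hdvd,
        BoundedFormula.realize_sup, BoundedFormula.realize_inf, BoundedFormula.realize_bdEqual,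
        BoundedFormula.realize_rel₂, realize_foldr_sup_of_base, List.mem_map, List.mem_finRange,
        true_and, exists_exists_eq_and, h.ne_iff, h.realize_toBarTerm, realize_zeroTerm]
      rw [h.not_dvd_iff, h.dvd_iff]
      exact ⟨Iff.rfl, or_comm⟩
  | imp _ _ ih₁ ih₂ =>
    simp only [toBarQF, BoundedFormula.realize_sup, BoundedFormula.realize_inf,
      BoundedFormula.realize_imp, ih₁.1, ih₁.2, ih₂.1, ih₂.2]
    tauto

theorem BarCompatible.exists_isPosEx_realize_iff (h : BarCompatible z str strBar) {m : ℕ}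
    {φ : (divLanguage F).Formula (Fin m)} (hφ : IsExistentialFormula φ) :
    ∃ ψ : (barLanguage F n).Formula (Fin m), IsPosEx ψ ∧
      ∀ c : Fin m → M, φ.Realize c ↔ ψ.Realize c := by
  obtain ⟨k, χ, hχ, rfl⟩ := hφ
  refine ⟨(toBarQF z true χ).exs, (isPosEx_toBarQF z hχ true).exs, fun c => ?_⟩
  rw [BoundedFormula.realize_exs, BoundedFormula.realize_exs]
  exact exists_congr fun xs => (h.realize_toBarQF hχ c xs).1.symm

end Translation

section Divisibility

lemma dvd_iff_eq_zero_or_dvd_and_ne_zero {α : Type*} [MonoidWithZero α] {x y : α} :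
    x ∣ y ↔ y = 0 ∨ (x ∣ y ∧ y ≠ 0) := by
  rcases eq_or_ne y 0 with rfl | hy <;> simp [*]

variable {R : Type*} [CommRing R] [IsDedekindDomain R]
variable {K : Type*} [Field K] [Algebra R K] [IsFractionRing R K]

lemma dvd_iff_forall_valuation_le {P : HeightOneSpectrum R → Prop}
    {x y : (integralAt P : Subring K)} (hx : x ≠ 0) :
    x ∣ y ↔ ∀ v, P v → v.valuation K (y : K) ≤ v.valuation K (x : K) := by
  have hxK : (x : K) ≠ 0 := by exact_mod_cast hx
  constructor
  · rintro ⟨c, rfl⟩ v hv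
    rw [Subring.coe_mul, map_mul]
    exact mul_le_of_le_one_right' (c.2 v hv)
  · intro hle
    refine ⟨⟨y / x, fun v hv => ?_⟩, Subtype.ext (mul_div_cancel₀ _ hxK).symm⟩
    rw [map_div₀]
    exact div_le_one_of_le₀ (hle v hv) zero_le

lemma not_dvd_iff_exists_valuation_lt {n : ℕ} (𝔭 : Fin n → HeightOneSpectrum R)
    (x y : (integralAt (fun v => ∃ i, 𝔭 i = v) : Subring K)) :
    ¬ x ∣ y ↔ (x = 0 ∧ y ≠ 0) ∨
      ∃ i, x ≠ 0 ∧ (𝔭 i).valuation K (x : K) < (𝔭 i).valuation K (y : K) := by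
  rcases eq_or_ne x 0 with rfl | hx
  · simp [zero_dvd_iff]
  · simp [dvd_iff_forall_valuation_le hx, hx]

lemma barCompatible_divStructure {n : ℕ} (𝔭 : Fin n → HeightOneSpectrum R) :
    BarCompatible DivFunc.zero (divStructure (integralAt (fun v => ∃ i, 𝔭 i = v) : Subring K))
      (barDivStructure _ 𝔭) where
  funMap_eq f _ := by cases f <;> rfl
  ne_iff _ _ := Iff.rfl
  dvd_iff _ _ := dvd_iff_eq_zero_or_dvd_and_ne_zero
  not_dvd_iff := not_dvd_iff_exists_valuation_lt 𝔭

lemma barCompatible_divTStructure {n : ℕ} (𝔭 : Fin n → HeightOneSpectrum R)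
    (τ : (integralAt (fun v => ∃ i, 𝔭 i = v) : Subring K)) :
    BarCompatible DivTFunc.zero (divTStructure _ τ) (barDivTStructure _ τ 𝔭) where
  funMap_eq f _ := by cases f <;> rfl
  ne_iff _ _ := Iff.rfl
  dvd_iff _ _ := dvd_iff_eq_zero_or_dvd_and_ne_zero
  not_dvd_iff := not_dvd_iff_exists_valuation_lt 𝔭

end Divisibility

/-- **Proposition.** Let `R = ℤ` (resp. `𝔽_p[t]`), `K` a finite separable extension
of its fraction field, `T = {𝔭_1, …, 𝔭_n}` a finite set of primes of `O_K`, and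
`O_{K,S}` the holomorphy ring at the complement of `T`. For every existential
formula `φ` of `L = L_div` (resp. `L_{div,t}`), there is a positive-existential
formula `φ̄` of the language `L̄` (with `|` replaced by `≠`, `‖`, `o_1, …, o_n`)
which is equivalent to `φ` over `O_{K,S}`. -/
theorem existential_iff_posEx_bar :
    (∀ (K : Type) [Field K] [NumberField K] (n : ℕ)
        (𝔭 : Fin n → HeightOneSpectrum (NumberField.RingOfIntegers K)),
        Function.Injective 𝔭 →
        ∀ (m : ℕ) (φ : Ldiv.Formula (Fin m)), IsExistentialFormula φ →
          ∃ ψ : (LbarDiv n).Formula (Fin m), IsPosEx ψ ∧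
            ∀ c : Fin m → ↥(integralAt (fun v => ∃ i, 𝔭 i = v) : Subring K),
              @Formula.Realize Ldiv ↥(integralAt (fun v => ∃ i, 𝔭 i = v) : Subring K)
                  (divStructure _) (Fin m) φ c ↔
              @Formula.Realize (LbarDiv n)
                  ↥(integralAt (fun v => ∃ i, 𝔭 i = v) : Subring K)
                  (barDivStructure (integralAt (fun v => ∃ i, 𝔭 i = v)) 𝔭)
                  (Fin m) ψ c) ∧
    (∀ (p : ℕ) [Fact p.Prime] (K : Type) [Field K]
        [Algebra (RatFunc (ZMod p)) K] [Algebra (Polynomial (ZMod p)) K]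
        [IsScalarTower (Polynomial (ZMod p)) (RatFunc (ZMod p)) K]
        [FunctionField (ZMod p) K] [Algebra.IsSeparable (RatFunc (ZMod p)) K]
        (n : ℕ) (𝔭 : Fin n → HeightOneSpectrum (OK p K)),
        Function.Injective 𝔭 →
        ∀ (m : ℕ) (φ : LdivT.Formula (Fin m)), IsExistentialFormula φ →
          ∃ ψ : (LbarDivT n).Formula (Fin m), IsPosEx ψ ∧
            ∀ c : Fin m → ↥(integralAt (fun v => ∃ i, 𝔭 i = v) : Subring K),
              @Formula.Realize LdivT ↥(integralAt (fun v => ∃ i, 𝔭 i = v) : Subring K)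
                  (divTStructure _ ⟨tK p K, tK_mem p K _⟩) (Fin m) φ c ↔
              @Formula.Realize (LbarDivT n)
                  ↥(integralAt (fun v => ∃ i, 𝔭 i = v) : Subring K)
                  (barDivTStructure (integralAt (fun v => ∃ i, 𝔭 i = v))
                    ⟨tK p K, tK_mem p K _⟩ 𝔭)
                  (Fin m) ψ c) := by
  exact ⟨fun K _ _ n 𝔭 _ m φ hφ =>
      (barCompatible_divStructure 𝔭).exists_isPosEx_realize_iff (str := divStructure _)
        (strBar := barDivStructure _ 𝔭) hφ,
    fun p _ K _ _ _ _ _ _ n 𝔭 _ m φ hφ =>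
      (barCompatible_divTStructure 𝔭 _).exists_isPosEx_realize_iff (str := divTStructure _ _)
        (strBar := barDivTStructure _ _ 𝔭) hφ⟩

end Paper
end

section
/- Let p be an odd rational prime, K a finite separable extension of F = 𝔽_p(t), O_K the integral closure of 𝔽_p[t] in K, S a finite set of places of K containing all the infinite places, and let q ∈ 𝔽_p[t] be irreducible and b ∈ 𝔽_p[t] non-zero of degree less than deg(q) be such that qx + b is never a unit of O_{K,S} for x ∈ O_{K,S}. Then for every y ∈ O_{K,S}: y ≠ 0 if and only if there exist r, s, x ∈ O_{K,S} such that r·y + s·(q·x + b) = 1. -/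
open FirstOrder Language IsDedekindDomain Polynomial

set_option linter.unusedSectionVars false

namespace Paper

section FunctionFieldSetting

variable (p : ℕ) [Fact p.Prime]
variable (K : Type*) [Field K] [Algebra (RatFunc (ZMod p)) K]
  [Algebra (Polynomial (ZMod p)) K]
  [IsScalarTower (Polynomial (ZMod p)) (RatFunc (ZMod p)) K]
  [FunctionField (ZMod p) K]
  [Algebra.IsSeparable (RatFunc (ZMod p)) K]

/-!
If `y = 0`, a Bézout relation would make `q x + b` a unit. Conversely write `y = n / d` with
`n, d ∈ O_K`. As `q` and `b` are coprime, the Chinese remainder theorem gives `x ∈ O_K` such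
that `q x + b` lies in none of the finitely many primes dividing `n` (a prime containing `q`
cannot contain `q x + b` anyway), so `u n + s (q x + b) = 1` in `O_K`, and `r := u d` works.
-/

section Bezout

variable {R : Type*} [CommRing R]

theorem _root_.Ideal.IsMaximal.isCoprime_span_singleton {m : Ideal R} (hm : m.IsMaximal)
    {q : R} (hq : q ∉ m) : IsCoprime (Ideal.span {q}) m := by
  obtain ⟨w, i, hi, hwi⟩ := hm.exists_inv hq
  exact Ideal.isCoprime_iff_exists.mpr
    ⟨w * q, Ideal.mem_span_singleton.mpr (dvd_mul_left q w), i, hi, hwi⟩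

theorem exists_mul_add_notMem_of_isCoprime {ι : Type*} {s : Finset ι} {m : ι → Ideal R}
    (hm : ∀ i ∈ s, (m i).IsMaximal) {q b : R} (hqb : IsCoprime q b) :
    ∃ x : R, ∀ i ∈ s, q * x + b ∉ m i := by
  classical
  have hJ : IsCoprime (Ideal.span {q}) (⨅ i ∈ s.filter (q ∉ m ·), m i) :=
    Ideal.isCoprime_biInf fun i hi => by
      rw [Finset.mem_filter] at hi
      exact (hm i hi.1).isCoprime_span_singleton hi.2
  obtain ⟨u, hu, c, hc, huc⟩ := Ideal.isCoprime_iff_exists.mp hJ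
  obtain ⟨w, rfl⟩ := Ideal.mem_span_singleton'.mp hu
  -- `q x + b = 1 - c (1 - b)` is `≡ 1` modulo every `m i` not containing `q`.
  refine ⟨w * (1 - b), fun i hi hz => ?_⟩
  have hprime := (hm i hi).isPrime
  by_cases hq : q ∈ m i
  · refine Ideal.IsPrime.notMem_of_isCoprime_of_mem hqb hq ?_
    simpa using (m i).sub_mem hz ((m i).mul_mem_right (w * (1 - b)) hq)
  · have hc : c ∈ m i := by
      simp only [Ideal.mem_iInf] at hc
      exact hc i (Finset.mem_filter.mpr ⟨hi, hq⟩)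
    have hz_eq : q * (w * (1 - b)) + b + c * (1 - b) = 1 := by
      linear_combination (1 - b) * huc
    exact hprime.one_notMem
      (hz_eq ▸ (m i).add_mem hz ((m i).mul_mem_right (1 - b) hc))

theorem exists_isCoprime_mul_add [IsDedekindDomain R] {n : R} (hn : n ≠ 0) {q b : R}
    (hqb : IsCoprime q b) : ∃ x : R, IsCoprime n (q * x + b) := by
  have hfin := Ideal.finite_factors (R := R) (I := Ideal.span {n})
    (by rwa [Ne, Ideal.zero_eq_bot, Ideal.span_singleton_eq_bot])
  obtain ⟨x, hx⟩ := exists_mul_add_notMem_of_isCoprime (s := hfin.toFinset)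
    (fun v _ => v.isMaximal) hqb
  refine ⟨x, (Ideal.isCoprime_span_singleton_iff _ _).mp <|
    Ideal.coprime_of_no_prime_ge fun P hnP hzP hP => ?_⟩
  have hP_ne_bot : P ≠ ⊥ := fun h => hn <| by
    simpa [h] using hnP (Ideal.mem_span_singleton_self n)
  refine hx ⟨P, hP, hP_ne_bot⟩ ?_ (hzP (Ideal.mem_span_singleton_self _))
  simpa [Ideal.dvd_iff_le] using hnP

theorem exists_algebraMap_mul_add_eq_one [IsDedekindDomain R] {L : Type*} [Field L]
    [Algebra R L] [IsFractionRing R L] {y : L} (hy : y ≠ 0) {q b : R} (hqb : IsCoprime q b) :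
    ∃ r s x : R, algebraMap R L r * y + algebraMap R L (s * (q * x + b)) = 1 := by
  obtain ⟨⟨n, d, hd⟩, hnd⟩ := IsLocalization.surj (nonZeroDivisors R) y
  have hn : n ≠ 0 := by
    rintro rfl
    simp [hy, IsFractionRing.to_map_ne_zero_of_mem_nonZeroDivisors hd] at hnd
  obtain ⟨x, u, s, hus⟩ := exists_isCoprime_mul_add hn hqb
  refine ⟨u * d, s, x, ?_⟩
  rw [← map_one (algebraMap R L), ← hus]
  simp only [map_add, map_mul]
  linear_combination algebraMap R L u * hnd

end Bezout

theorem _root_.Polynomial.isCoprime_of_irreducible_of_degree_lt {k : Type*} [Field k]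
    {q b : k[X]} (hq : Irreducible q) (hb : b ≠ 0) (hdeg : b.degree < q.degree) :
    IsCoprime q b :=
  hq.coprime_iff_not_dvd.mpr fun hqb => (degree_le_of_dvd hqb hb).not_gt hdeg

theorem ne_zero_iff_bezout
    (Sf : Finset (HeightOneSpectrum (OK p K)))
    (q b : Polynomial (ZMod p)) (hq : Irreducible q) (hb : b ≠ 0)
    (hdeg : b.degree < q.degree)
    (hnever : ∀ x : holoFin p K Sf,
      ¬ IsUnit ((⟨algebraMap (Polynomial (ZMod p)) K q, polyMem_holoFin p K Sf q⟩ :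
            holoFin p K Sf) * x +
          (⟨algebraMap (Polynomial (ZMod p)) K b, polyMem_holoFin p K Sf b⟩ :
            holoFin p K Sf))) :
    ∀ y : holoFin p K Sf, y ≠ 0 ↔
      ∃ r s x : holoFin p K Sf,
        r * y + s * ((⟨algebraMap (Polynomial (ZMod p)) K q, polyMem_holoFin p K Sf q⟩ :
            holoFin p K Sf) * x +
          (⟨algebraMap (Polynomial (ZMod p)) K b, polyMem_holoFin p K Sf b⟩ :
            holoFin p K Sf)) = 1 := by
  intro y
  constructor
  · intro hy
    have hqb := (isCoprime_of_irreducible_of_degree_lt hq hb hdeg).map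
      (algebraMap (ZMod p)[X] (OK p K))
    obtain ⟨r, s, x, h⟩ := exists_algebraMap_mul_add_eq_one (L := K)
      (Subtype.coe_ne_coe.mpr hy) hqb
    refine ⟨⟨_, algebraMap_mem_integralAt _ r⟩, ⟨_, algebraMap_mem_integralAt _ s⟩,
      ⟨_, algebraMap_mem_integralAt _ x⟩, Subtype.ext ?_⟩
    simp only [map_add, map_mul, ← IsScalarTower.algebraMap_apply] at h
    exact h
  · rintro ⟨r, s, x, h⟩ rfl
    rw [mul_zero, zero_add] at h
    exact hnever x (.of_mul_eq_one s (mul_comm s _ ▸ h))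

end FunctionFieldSetting

end Paper
end

section
/- With the notation below, let a, b ∈ K^× with ord_{∞_i}(b) ≤ C₁ for every i = 1, …, s_∞, and let q_1, …, q_{2s_∞+1} ∈ 𝔽_p[t] be irreducible polynomials with pairwise distinct degrees satisfying ord_∞(q_j − q_ℓ) < −2C₁ for all j ≠ ℓ. Then there exists an index j₀ such that for every i = 1, …, s_∞: ord_{∞_i}(a) ≠ ord_{∞_i}(b·q_{j₀}) and ord_{∞_i}(a + b·q_{j₀}) ≤ 0. -/
open FirstOrder Language IsDedekindDomain Polynomial

set_option linter.unusedSectionVars false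

namespace Paper

section FunctionFieldSetting

variable (p : ℕ) [Fact p.Prime]
variable (K : Type*) [Field K] [Algebra (RatFunc (ZMod p)) K]
  [Algebra (Polynomial (ZMod p)) K]
  [IsScalarTower (Polynomial (ZMod p)) (RatFunc (ZMod p)) K]
  [FunctionField (ZMod p) K]
  [Algebra.IsSeparable (RatFunc (ZMod p)) K]

/-- The valuation subring at infinity of `𝔽_p(t)` (consisting of the rational
functions of degree at most `0`). -/
noncomputable def inftyVSR : ValuationSubring (RatFunc (ZMod p)) :=
  letI := Classical.decEq (RatFunc (ZMod p))
  (FunctionField.inftyValuation (ZMod p)).valuationSubring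

/-- The infinite places of `K`: the valuation subrings of `K` lying above the
place at infinity of `𝔽_p(t)`. -/
noncomputable def InfPlace : Type _ :=
  {V : ValuationSubring K // V.comap (algebraMap (RatFunc (ZMod p)) K) = inftyVSR p}

/-- The number of infinite places of `K`. -/
noncomputable def numInfPlaces : ℕ := Nat.card (InfPlace p K)

/-- The infinite places of `K` together with their normalized (surjective,
`ℤ`-valued) additive valuations: `W` enumerates, without repetition, all the
valuation subrings of `K` lying above the place at infinity of `𝔽_p(t)`, and
`ord i` is the corresponding normalized additive valuation. -/
structure InfData where
  /-- the number `s_∞` of infinite places -/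
  s : ℕ
  pos : 0 < s
  /-- the valuation subrings at the infinite places -/
  W : Fin s → ValuationSubring K
  inj : Function.Injective W
  above : ∀ i, (W i).comap (algebraMap (RatFunc (ZMod p)) K) = inftyVSR p
  complete : ∀ V : ValuationSubring K,
    V.comap (algebraMap (RatFunc (ZMod p)) K) = inftyVSR p → ∃ i, V = W i
  /-- the normalized additive valuations `ord_{∞_i}` -/
  ord : Fin s → K → ℤ
  ord_mul : ∀ i (x y : K), x ≠ 0 → y ≠ 0 → ord i (x * y) = ord i x + ord i y
  ord_add : ∀ i (x y : K), x ≠ 0 → y ≠ 0 → x + y ≠ 0 →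
    min (ord i x) (ord i y) ≤ ord i (x + y)
  ord_surj : ∀ i (n : ℤ), ∃ x : K, x ≠ 0 ∧ ord i x = n
  mem_iff : ∀ i (x : K), x ≠ 0 → (x ∈ W i ↔ 0 ≤ ord i x)

/-- `ord_min(x) = min {ord_{∞_i}(x) : i = 1, …, s_∞}`. -/
noncomputable def ordMin (I : InfData p K) (x : K) : ℤ :=
  haveI : Nonempty (Fin I.s) := Fin.pos_iff_nonempty.mp I.pos
  Finset.univ.inf' Finset.univ_nonempty (fun i => I.ord i x)


end FunctionFieldSetting

/-! At an infinite place `∞_i` a nonzero polynomial `f` has `ord(f) = deg f · ord(t)` with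
`ord(t) < 0`. As the `q_j` have distinct degrees, the orders of the `b q_j` are pairwise
distinct, so `ord(a) = ord(b q_j)` for at most one `j`. As `ord(b (q_j - q_l)) < 0`, the
ultrametric inequality forbids `ord(a + b q_j) > 0` for two different `j`. These are at most
`2 s_∞` exclusions among `2 s_∞ + 1` indices. -/

theorem exists_forall_not_of_subsingleton {ι α : Type*} [Fintype ι] [Fintype α]
    {P : ι → α → Prop} (hP : ∀ i, {a | P i a}.Subsingleton)
    (hcard : Fintype.card ι < Fintype.card α) : ∃ a, ∀ i, ¬P i a := by
  classical
  have hcard_union : (Finset.univ.biUnion fun i => {a | P i a}.toFinset).card <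
      (Finset.univ : Finset α).card :=
    calc _ ≤ ∑ i, {a | P i a}.toFinset.card := Finset.card_biUnion_le
      _ ≤ ∑ _i : ι, 1 := Finset.sum_le_sum fun i _ =>
          Finset.card_le_one.mpr fun a ha b hb => hP i (by simpa using ha) (by simpa using hb)
      _ < _ := by simpa using hcard
  obtain ⟨a, -, ha⟩ := Finset.exists_mem_notMem_of_card_lt_card hcard_union
  exact ⟨a, fun i hi =>
    ha (Finset.mem_biUnion.mpr ⟨i, Finset.mem_univ i, by simpa using hi⟩)⟩

theorem exists_forall_not_and_not_of_subsingleton {ι α : Type*} [Fintype ι] [Fintype α]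
    {P R : ι → α → Prop} (hP : ∀ i, {a | P i a}.Subsingleton)
    (hR : ∀ i, {a | R i a}.Subsingleton) (hcard : 2 * Fintype.card ι < Fintype.card α) :
    ∃ a, ∀ i, ¬P i a ∧ ¬R i a := by
  obtain ⟨a, ha⟩ := exists_forall_not_of_subsingleton (P := Sum.elim P R)
    (Sum.forall.mpr ⟨hP, hR⟩) (by simpa [two_mul] using hcard)
  exact ⟨a, fun i => ⟨ha (.inl i), ha (.inr i)⟩⟩

theorem algebraMap_polynomial_ne_zero {F K : Type*} [Field F] [Field K]
    [Algebra (RatFunc F) K] [Algebra F[X] K] [IsScalarTower F[X] (RatFunc F) K]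
    {f : F[X]} (hf : f ≠ 0) : algebraMap F[X] K f ≠ 0 := by
  rw [IsScalarTower.algebraMap_apply F[X] (RatFunc F) K]
  exact (_root_.map_ne_zero _).mpr (RatFunc.algebraMap_ne_zero hf)

namespace InfData

variable {p : ℕ} [Fact p.Prime] {K : Type*} [Field K] [Algebra (RatFunc (ZMod p)) K]
  (I : InfData p K) (i : Fin I.s)

theorem ord_one : I.ord i 1 = 0 := by
  have h := I.ord_mul i 1 1 one_ne_zero one_ne_zero
  rw [mul_one] at h
  omega

theorem ord_inv {x : K} (hx : x ≠ 0) : I.ord i x⁻¹ = -I.ord i x := by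
  have h := I.ord_mul i x x⁻¹ hx (inv_ne_zero hx)
  rw [mul_inv_cancel₀ hx, ord_one] at h
  omega

theorem ord_neg {x : K} (hx : x ≠ 0) : I.ord i (-x) = I.ord i x := by
  have h := I.ord_mul i (-1) (-1) (by norm_num) (by norm_num)
  rw [neg_mul_neg, one_mul, ord_one] at h
  rw [← neg_one_mul, I.ord_mul i _ _ (by norm_num) hx]
  omega

theorem ord_pow {x : K} (hx : x ≠ 0) (n : ℕ) : I.ord i (x ^ n) = n * I.ord i x := by
  induction n with
  | zero => simp [ord_one]
  | succ n ih =>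
    rw [pow_succ, I.ord_mul i _ x (pow_ne_zero n hx) hx, ih]
    push_cast
    ring

theorem min_ord_le_ord_sub {x y : K} (hx : x ≠ 0) (hy : y ≠ 0) (hxy : x - y ≠ 0) :
    min (I.ord i x) (I.ord i y) ≤ I.ord i (x - y) := by
  rw [sub_eq_add_neg] at hxy ⊢
  simpa only [I.ord_neg i hy] using I.ord_add i x (-y) hx (neg_ne_zero.mpr hy) hxy

theorem ord_algebraMap_nonneg_iff {y : RatFunc (ZMod p)} (hy : y ≠ 0) :
    0 ≤ I.ord i (algebraMap (RatFunc (ZMod p)) K y) ↔ y.intDegree ≤ 0 := by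
  classical
  rw [← I.mem_iff i _ ((_root_.map_ne_zero _).mpr hy)]
  change y ∈ (I.W i).comap _ ↔ _
  rw [I.above i]
  change RatFunc.inftyValuation (ZMod p) y ≤ 1 ↔ _
  rw [RatFunc.inftyValuation_apply, RatFunc.inftyValuation_of_nonzero _ hy,
    ← WithZero.exp_zero, WithZero.exp_le_exp]

theorem ord_algebraMap_eq_zero {y : RatFunc (ZMod p)} (hy : y ≠ 0) (hd : y.intDegree = 0) :
    I.ord i (algebraMap (RatFunc (ZMod p)) K y) = 0 := by
  have h₁ := (I.ord_algebraMap_nonneg_iff i hy).mpr hd.le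
  have h₂ := (I.ord_algebraMap_nonneg_iff i (inv_ne_zero hy)).mpr
    (by rw [RatFunc.intDegree_inv, hd, neg_zero])
  rw [map_inv₀, I.ord_inv i ((_root_.map_ne_zero _).mpr hy)] at h₂
  omega

theorem ord_tK_neg : I.ord i (tK p K) < 0 := by
  rw [← not_le, tK, I.ord_algebraMap_nonneg_iff i RatFunc.X_ne_zero, RatFunc.intDegree_X]
  decide

section Polynomial

variable [Algebra (ZMod p)[X] K] [IsScalarTower (ZMod p)[X] (RatFunc (ZMod p)) K]

theorem ord_algebraMap_polynomial {f : (ZMod p)[X]} (hf : f ≠ 0) :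
    I.ord i (algebraMap (ZMod p)[X] K f) = f.natDegree * I.ord i (tK p K) := by
  have htK : tK p K ≠ 0 := (_root_.map_ne_zero _).mpr RatFunc.X_ne_zero
  have htK_eq : tK p K = algebraMap (ZMod p)[X] K X := by
    rw [tK, ← RatFunc.algebraMap_X, ← IsScalarTower.algebraMap_apply]
  have hXn : (X ^ f.natDegree : (ZMod p)[X]) ≠ 0 := pow_ne_zero _ X_ne_zero
  set y : RatFunc (ZMod p) :=
    algebraMap (ZMod p)[X] _ f / algebraMap (ZMod p)[X] _ (X ^ f.natDegree)
  have hy : y ≠ 0 :=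
    div_ne_zero (RatFunc.algebraMap_ne_zero hf) (RatFunc.algebraMap_ne_zero hXn)
  have hdeg : y.intDegree = 0 := by
    rw [RatFunc.intDegree_div (RatFunc.algebraMap_ne_zero hf) (RatFunc.algebraMap_ne_zero hXn),
      RatFunc.intDegree_polynomial, RatFunc.intDegree_polynomial, natDegree_X_pow, sub_self]
  have hfactor : algebraMap (ZMod p)[X] K f =
      algebraMap (RatFunc (ZMod p)) K y * tK p K ^ f.natDegree := by
    rw [map_div₀, ← IsScalarTower.algebraMap_apply, ← IsScalarTower.algebraMap_apply, htK_eq,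
      ← map_pow, div_mul_cancel₀ _ (algebraMap_polynomial_ne_zero hXn)]
  rw [hfactor, I.ord_mul i _ _ ((_root_.map_ne_zero _).mpr hy) (pow_ne_zero _ htK),
    I.ord_algebraMap_eq_zero i hy hdeg, I.ord_pow i htK, zero_add]

theorem natDegree_eq_of_ord_mul_eq {b : K} (hb : b ≠ 0) {f g : (ZMod p)[X]} (hf : f ≠ 0)
    (hg : g ≠ 0)
    (h : I.ord i (b * algebraMap (ZMod p)[X] K f) = I.ord i (b * algebraMap (ZMod p)[X] K g)) :
    f.natDegree = g.natDegree := by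
  rw [I.ord_mul i _ _ hb (algebraMap_polynomial_ne_zero hf),
    I.ord_mul i _ _ hb (algebraMap_polynomial_ne_zero hg), I.ord_algebraMap_polynomial i hf,
    I.ord_algebraMap_polynomial i hg, add_right_inj] at h
  exact_mod_cast mul_right_cancel₀ (I.ord_tK_neg i).ne h

theorem ord_mul_polynomial_neg {b : K} (hb : b ≠ 0) {C : ℕ} (hbC : I.ord i b ≤ C)
    {f : (ZMod p)[X]} (hf : C < f.natDegree) :
    I.ord i (b * algebraMap (ZMod p)[X] K f) < 0 := by
  have hf₀ : f ≠ 0 := by rintro rfl; simp at hf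
  rw [I.ord_mul i _ _ hb (algebraMap_polynomial_ne_zero hf₀), I.ord_algebraMap_polynomial i hf₀]
  have htK := I.ord_tK_neg i
  have hC : (C : ℤ) < f.natDegree := by exact_mod_cast hf
  nlinarith

theorem ord_add_mul_nonpos_of_pos {a b : K} (hb : b ≠ 0) {C : ℕ} (hbC : I.ord i b ≤ C)
    {f g : (ZMod p)[X]} (hfg : C < (f - g).natDegree)
    (hf : a + b * algebraMap (ZMod p)[X] K f ≠ 0)
    (hf_pos : 0 < I.ord i (a + b * algebraMap (ZMod p)[X] K f))
    (hg : a + b * algebraMap (ZMod p)[X] K g ≠ 0) :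
    I.ord i (a + b * algebraMap (ZMod p)[X] K g) ≤ 0 := by
  have hdiff : (a + b * algebraMap (ZMod p)[X] K f) - (a + b * algebraMap (ZMod p)[X] K g) =
      b * algebraMap (ZMod p)[X] K (f - g) := by
    rw [map_sub]; ring
  have hneg := I.ord_mul_polynomial_neg i hb hbC hfg
  have hfg₀ : f - g ≠ 0 := by rintro h; simp [h] at hfg
  have hmin := I.min_ord_le_ord_sub i hf hg
    (hdiff ▸ mul_ne_zero hb (algebraMap_polynomial_ne_zero hfg₀))
  rw [hdiff] at hmin
  omega

end Polynomial

end InfData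

section FunctionFieldSetting

variable (p : ℕ) [Fact p.Prime]
variable (K : Type*) [Field K] [Algebra (RatFunc (ZMod p)) K]
  [Algebra (Polynomial (ZMod p)) K]
  [IsScalarTower (Polynomial (ZMod p)) (RatFunc (ZMod p)) K]
  [FunctionField (ZMod p) K]
  [Algebra.IsSeparable (RatFunc (ZMod p)) K]

theorem exists_good_index_at_infinity (I : InfData p K)
    (C₁ : ℕ) (a b : K) (hb : b ≠ 0)
    (hbord : ∀ i : Fin I.s, I.ord i b ≤ (C₁ : ℤ))
    (Q : Fin (2 * I.s + 1) → Polynomial (ZMod p))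
    (hQirr : ∀ j, Irreducible (Q j))
    (hQdeg : ∀ j j', j ≠ j' → (Q j).natDegree ≠ (Q j').natDegree)
    (hQdiff : ∀ j j', j ≠ j' → 2 * C₁ < (Q j - Q j').natDegree) :
    ∃ j₀ : Fin (2 * I.s + 1), ∀ i : Fin I.s,
      I.ord i a ≠ I.ord i (b * algebraMap (Polynomial (ZMod p)) K (Q j₀)) ∧
      I.ord i (a + b * algebraMap (Polynomial (ZMod p)) K (Q j₀)) ≤ 0 := by
  have hQ₀ : ∀ j, Q j ≠ 0 := fun j => (hQirr j).ne_zero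
  obtain ⟨j₀, hj₀⟩ := exists_forall_not_and_not_of_subsingleton
    (P := fun i j => I.ord i a = I.ord i (b * algebraMap (ZMod p)[X] K (Q j)))
    (R := fun i j => a + b * algebraMap (ZMod p)[X] K (Q j) ≠ 0 ∧
      0 < I.ord i (a + b * algebraMap (ZMod p)[X] K (Q j)))
    (fun i j hj l hl => by
      by_contra hne
      exact hQdeg j l hne
        (I.natDegree_eq_of_ord_mul_eq i hb (hQ₀ j) (hQ₀ l) (hj.symm.trans hl)))
    (fun i j hj l hl => by
      by_contra hne
      have hC : C₁ < (Q j - Q l).natDegree := by have := hQdiff j l hne; omega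
      exact (I.ord_add_mul_nonpos_of_pos i hb (hbord i) hC hj.1 hj.2 hl.1).not_gt hl.2)
    (by simp)
  refine ⟨j₀, fun i => ⟨(hj₀ i).1, ?_⟩⟩
  by_cases hz : a + b * algebraMap (ZMod p)[X] K (Q j₀) = 0
  · -- `I.ord i 0` is unconstrained: this case is excluded by the first condition instead
    refine absurd ?_ (hj₀ i).1
    rw [eq_neg_of_add_eq_zero_left hz,
      I.ord_neg i (mul_ne_zero hb (algebraMap_polynomial_ne_zero (hQ₀ j₀)))]
  · exact not_lt.mp fun hpos => (hj₀ i).2 ⟨hz, hpos⟩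

end FunctionFieldSetting

end Paper
end
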